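/- arXiv:2405.13755 — 3 statements merged into one kernel-verified Lean document; each statement's English description precedes it below -/
import Mathlib

section
/- In a linear MDP, the set M = {μ : (λ,μ) ∈ M^P_Φ} of μ-components of feasible points of the relaxed primal LP coincides with the feasible set of the original primal LP, i.e. with the set of valid discounted state-action occupancy measures {μ ⪰ 0 : Eᵀμ = (1−γ)ν₀ + γPᵀμ}. Furthermore, for every maximizer (λ*, μ*) of ⟨λ, ω⟩ over M^P_Φ, μ* is the occupancy measure of an optimal policy. -/
/-!
Under linearity, `⟨ψ x, Φᵀμ⟩ = (Pᵀμ)(x)` and `⟨Φᵀμ, ω⟩ = ⟨μ, r⟩`, so the constraint `λ = Φᵀμ`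
turns the relaxed constraints into the Bellman flow equations and the objective into the return.
A nonnegative solution `μ` of the flow equations is the occupancy measure of its conditional
policy `π(a | x) = μ(x, a) / ∑_b μ(x, b)`: both measures factor through `π`, and their state
marginals solve the same equation `ρ = (1 - γ) ν₀ + γ P_πᵀ ρ`, whose solution is unique since
`γ P_πᵀ` is a contraction in `ℓ¹`. Maximizing `⟨λ, ω⟩` over `M^P_Φ` is therefore maximizing the
return over all policies.
-/

noncomputable section
open MeasureTheory Finset Matrix
open scoped BigOperators ENNReal

namespace Paper

variable {X A : Type*}

/-- Euclidean dot product on `Fin d → ℝ`. -/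
def dotp {d : ℕ} (u v : Fin d → ℝ) : ℝ := ∑ i, u i * v i

/-- Euclidean norm on `Fin d → ℝ`. -/
def nrm2 {d : ℕ} (u : Fin d → ℝ) : ℝ := Real.sqrt (∑ i, (u i) ^ 2)

/-- Squared weighted norm `uᵀ M u`. -/
def wnormSq {d : ℕ} (M : Matrix (Fin d) (Fin d) ℝ) (u : Fin d → ℝ) : ℝ := dotp u (M.mulVec u)

/-- Kullback–Leibler divergence between finitely supported distributions. -/
def KLdiv [Fintype A] (p q : A → ℝ) : ℝ := ∑ a, p a * Real.log (p a / q a)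

/-- A stochastic policy. -/
def IsPolicy [Fintype A] (π : X → A → ℝ) : Prop :=
  (∀ x a, 0 ≤ π x a) ∧ (∀ x, ∑ a, π x a = 1)

/-- A probability distribution over a finite set. -/
def IsDist [Fintype X] (ν : X → ℝ) : Prop := (∀ x, 0 ≤ ν x) ∧ ∑ x, ν x = 1

/-- A transition kernel. -/
def IsKernel [Fintype X] (p : X → A → X → ℝ) : Prop :=
  (∀ x a x', 0 ≤ p x a x') ∧ (∀ x a, ∑ x', p x a x' = 1)

/-- The softmax policy associated with parameter vector `θ`. -/
def softmax [Fintype A] {d : ℕ} (φ : X → A → Fin d → ℝ) (θ : Fin d → ℝ) (x : X) (a : A) : ℝ :=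
  Real.exp (dotp (φ x a) θ) / ∑ a', Real.exp (dotp (φ x a') θ)

/-- State-action distribution at step `k` of the process started from `ν₀` and following `π`. -/
def trajDist [Fintype X] [Fintype A] (p : X → A → X → ℝ) (ν₀ : X → ℝ) (π : X → A → ℝ) :
    ℕ → X → A → ℝ
  | 0 => fun x a => ν₀ x * π x a
  | k + 1 => fun x a => (∑ x', ∑ a', trajDist p ν₀ π k x' a' * p x' a' x) * π x a

/-- Normalized discounted state-action occupancy measure of policy `π`. -/
def occupancy [Fintype X] [Fintype A] (γ : ℝ) (p : X → A → X → ℝ) (ν₀ : X → ℝ)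
    (π : X → A → ℝ) (x : X) (a : A) : ℝ :=
  (1 - γ) * ∑' k : ℕ, γ ^ k * trajDist p ν₀ π k x a

/-- `k`-step state transition kernel of the Markov chain induced by policy `π`. -/
def kernelPow [Fintype X] [Fintype A] [DecidableEq X] (p : X → A → X → ℝ) (π : X → A → ℝ) :
    ℕ → X → X → ℝ
  | 0 => fun x y => if x = y then 1 else 0
  | k + 1 => fun x y => ∑ z, kernelPow p π k x z * ∑ a, π z a * p z a y

/-- The value function of policy `π`. -/
def vval [Fintype X] [Fintype A] [DecidableEq X] (γ : ℝ) (r : X → A → ℝ) (p : X → A → X → ℝ)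
    (π : X → A → ℝ) (x : X) : ℝ :=
  ∑' k : ℕ, γ ^ k * ∑ y, kernelPow p π k x y * ∑ a, π y a * r y a

/-- The action-value function of policy `π`. -/
def qval [Fintype X] [Fintype A] [DecidableEq X] (γ : ℝ) (r : X → A → ℝ) (p : X → A → X → ℝ)
    (π : X → A → ℝ) (x : X) (a : A) : ℝ :=
  r x a + γ * ∑ x', p x a x' * vval γ r p π x'

/-- The normalized discounted return of policy `π`. -/
def ret [Fintype X] [Fintype A] (γ : ℝ) (p : X → A → X → ℝ) (ν₀ : X → ℝ) (r : X → A → ℝ)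
    (π : X → A → ℝ) : ℝ := ∑ x, ∑ a, occupancy γ p ν₀ π x a * r x a

/-- The parametrized value-function candidate `v_{θ,π}`. -/
def vparam [Fintype A] {d : ℕ} (φ : X → A → Fin d → ℝ) (θ : Fin d → ℝ) (π : X → A → ℝ)
    (x : X) : ℝ := ∑ a, π x a * dotp θ (φ x a)

/-- `Ψ v`, where `Ψ` is the matrix with columns `ψ x`. -/
def psiApply [Fintype X] {d : ℕ} (ψ : X → Fin d → ℝ) (v : X → ℝ) : Fin d → ℝ :=
  ∑ x, v x • ψ x

/-- `Φᵀ μ`, the feature occupancy of a state-action measure `μ`. -/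
def featOcc [Fintype X] [Fintype A] {d : ℕ} (φ : X → A → Fin d → ℝ) (μ : X → A → ℝ) :
    Fin d → ℝ := ∑ x, ∑ a, μ x a • φ x a

/-- The parametrized occupancy candidate `μ_{λ,π}` built from columns `ψh`. -/
def muOf [Fintype X] {d : ℕ} (γ : ℝ) (ν₀ : X → ℝ) (ψh : X → Fin d → ℝ) (lam : Fin d → ℝ)
    (π : X → A → ℝ) (x : X) (a : A) : ℝ :=
  π x a * ((1 - γ) * ν₀ x + γ * dotp (ψh x) lam)

/-- The reduced Lagrangian `f(λ, π; θ)`. -/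
def lag [Fintype X] [Fintype A] {d : ℕ} (γ : ℝ) (ν₀ : X → ℝ) (omg : Fin d → ℝ)
    (ψ : X → Fin d → ℝ) (φ : X → A → Fin d → ℝ) (lam θv : Fin d → ℝ) (π : X → A → ℝ) : ℝ :=
  (1 - γ) * ∑ x, ν₀ x * vparam φ θv π x
    + dotp lam (omg + γ • psiApply ψ (vparam φ θv π) - θv)

/-- The regularized empirical covariance matrix `Λ̂`. -/
def covMat {d n : ℕ} (β : ℝ) (φi : Fin n → Fin d → ℝ) : Matrix (Fin d) (Fin d) ℝ :=
  β • (1 : Matrix (Fin d) (Fin d) ℝ) + (n : ℝ)⁻¹ • ∑ i, vecMulVec (φi i) (φi i)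

/-- `Ψ̂ v`, where `Ψ̂` is the least-squares estimator of `Ψ`. -/
def psiHatApply {X : Type*} {d n : ℕ} (β : ℝ) (φi : Fin n → Fin d → ℝ)
    (xs : Fin n → X) (v : X → ℝ) : Fin d → ℝ :=
  (covMat β φi)⁻¹.mulVec ((n : ℝ)⁻¹ • ∑ i, v (xs i) • φi i)

/-- `ψ̂ x`, the column of the least-squares estimator `Ψ̂` at state `x`. -/
def psiHatCol {X : Type*} [DecidableEq X] {d n : ℕ} (β : ℝ) (φi : Fin n → Fin d → ℝ)
    (xs : Fin n → X) (x : X) : Fin d → ℝ :=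
  (covMat β φi)⁻¹.mulVec ((n : ℝ)⁻¹ • ∑ i, (if xs i = x then (1 : ℝ) else 0) • φi i)


/-- The feasible set of the relaxed primal LP (3). -/
def MPfeas {X A : Type*} [Fintype X] [Fintype A] {d : ℕ}
    (γ : ℝ) (ν₀ : X → ℝ) (φ : X → A → Fin d → ℝ) (ψ : X → Fin d → ℝ)
    (lam : Fin d → ℝ) (μv : X → A → ℝ) : Prop :=
  (∀ x a, 0 ≤ μv x a) ∧
  (∀ x, ∑ a, μv x a = (1 - γ) * ν₀ x + γ * dotp (ψ x) lam) ∧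
  lam = featOcc φ μv

section Contraction

variable {ι : Type*} [Fintype ι]

/-- Comparing `ℓ¹` norms, `∑ |δ| ≤ γ ∑ |δ|` because `K` is row-stochastic. -/
lemma eq_zero_of_eq_mul_sum_mul_stochastic {γ : ℝ} (hγ0 : 0 ≤ γ) (hγ1 : γ < 1)
    {K : ι → ι → ℝ} (hK0 : ∀ i j, 0 ≤ K i j) (hK1 : ∀ i, ∑ j, K i j = 1) {δ : ι → ℝ}
    (hδ : ∀ j, δ j = γ * ∑ i, δ i * K i j) : δ = 0 := by
  have hS : ∑ j, |δ j| ≤ γ * ∑ j, |δ j| :=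
    calc ∑ j, |δ j| = ∑ j, γ * |∑ i, δ i * K i j| := sum_congr rfl fun j _ => by
          conv_lhs => rw [hδ j]
          rw [abs_mul, abs_of_nonneg hγ0]
      _ ≤ ∑ j, γ * ∑ i, |δ i| * K i j := by
          gcongr with j
          refine (abs_sum_le_sum_abs _ _).trans_eq (sum_congr rfl fun i _ => ?_)
          rw [abs_mul, abs_of_nonneg (hK0 i j)]
      _ = γ * ∑ i, |δ i| * ∑ j, K i j := by
          rw [← mul_sum, sum_comm]
          simp_rw [mul_sum]
      _ = γ * ∑ j, |δ j| := by simp only [hK1, mul_one]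
  have hS0 : ∑ j, |δ j| = 0 :=
    le_antisymm (by nlinarith [sum_nonneg fun j (_ : j ∈ univ) => abs_nonneg (δ j)])
      (sum_nonneg fun j _ => abs_nonneg (δ j))
  funext j
  exact abs_eq_zero.1
    ((sum_eq_zero_iff_of_nonneg fun i _ => abs_nonneg (δ i)).1 hS0 j (mem_univ j))

end Contraction

section Flow

variable [Fintype X] [Fintype A]

def IsBellmanFlow (γ : ℝ) (p : X → A → X → ℝ) (ν₀ : X → ℝ) (μ : X → A → ℝ) : Prop :=
  ∀ x, ∑ a, μ x a = (1 - γ) * ν₀ x + γ * ∑ x', ∑ a', p x' a' x * μ x' a'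

/-- The feasible set of the original primal LP: the valid occupancy measures. -/
def PrimalFeasible (γ : ℝ) (p : X → A → X → ℝ) (ν₀ : X → ℝ) (μ : X → A → ℝ) : Prop :=
  (∀ x a, 0 ≤ μ x a) ∧ IsBellmanFlow γ p ν₀ μ

variable {γ : ℝ} {p : X → A → X → ℝ} {ν₀ : X → ℝ} {π : X → A → ℝ}

lemma nonempty_of_isBellmanFlow {μ : X → A → ℝ} (hγ1 : γ < 1) (hν : IsDist ν₀)
    (hμ : IsBellmanFlow γ p ν₀ μ) : Nonempty A := by
  by_contra hA
  rw [not_nonempty_iff] at hA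
  have hν0 : ∀ x, ν₀ x = 0 := fun x => by
    have := hμ x
    simp only [univ_eq_empty, sum_empty, sum_const_zero, mul_zero, add_zero] at this
    exact (mul_eq_zero.1 this.symm).resolve_left (by linarith)
  simpa [hν0] using hν.2

lemma eq_of_isBellmanFlow (hγ0 : 0 ≤ γ) (hγ1 : γ < 1) (hp : IsKernel p) (hπ : IsPolicy π)
    {μ μ' : X → A → ℝ} (hμ : IsBellmanFlow γ p ν₀ μ) (hμ' : IsBellmanFlow γ p ν₀ μ')
    (hfμ : ∀ x a, μ x a = (∑ b, μ x b) * π x a)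
    (hfμ' : ∀ x a, μ' x a = (∑ b, μ' x b) * π x a) : μ = μ' := by
  set K : X → X → ℝ := fun x' x => ∑ a, π x' a * p x' a x
  have hK0 : ∀ x' x, 0 ≤ K x' x := fun x' x =>
    sum_nonneg fun a _ => mul_nonneg (hπ.1 x' a) (hp.1 x' a x)
  have hK1 : ∀ x', ∑ x, K x' x = 1 := fun x' => by
    simp only [K, sum_comm (s := univ (α := X)), ← mul_sum, hp.2, mul_one, hπ.2]
  have hinflow : ∀ ν : X → A → ℝ, (∀ x a, ν x a = (∑ b, ν x b) * π x a) →
      ∀ x, ∑ x', ∑ a', p x' a' x * ν x' a' = ∑ x', (∑ b, ν x' b) * K x' x :=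
    fun ν hν x => sum_congr rfl fun x' _ => by
      rw [mul_sum]
      refine sum_congr rfl fun a' _ => ?_
      rw [hν x' a']
      ring
  have hδ := eq_zero_of_eq_mul_sum_mul_stochastic hγ0 hγ1 hK0 hK1
    (δ := fun x => ∑ b, μ x b - ∑ b, μ' x b) fun x => by
      simp only [hμ x, hμ' x, hinflow μ hfμ, hinflow μ' hfμ', sub_mul, sum_sub_distrib]
      ring
  funext x a
  rw [hfμ, hfμ', sub_eq_zero.1 (congrFun hδ x)]

end Flow

section Occupancy

variable [Fintype X] [Fintype A] {γ : ℝ} {p : X → A → X → ℝ} {ν₀ : X → ℝ} {π : X → A → ℝ}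

lemma sum_trajDist_succ (hπ : ∀ x, ∑ a, π x a = 1) (k : ℕ) (x : X) :
    ∑ a, trajDist p ν₀ π (k + 1) x a = ∑ x', ∑ a', trajDist p ν₀ π k x' a' * p x' a' x := by
  simp only [trajDist, ← mul_sum, hπ x, mul_one]

lemma trajDist_eq_sum_mul (hπ : ∀ x, ∑ a, π x a = 1) (k : ℕ) (x : X) (a : A) :
    trajDist p ν₀ π k x a = (∑ b, trajDist p ν₀ π k x b) * π x a := by
  cases k <;> simp [trajDist, ← mul_sum, hπ x]

lemma trajDist_nonneg (hp : ∀ x a x', 0 ≤ p x a x') (hν : ∀ x, 0 ≤ ν₀ x)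
    (hπ : ∀ x a, 0 ≤ π x a) (k : ℕ) (x : X) (a : A) : 0 ≤ trajDist p ν₀ π k x a := by
  induction k generalizing x a with
  | zero => exact mul_nonneg (hν x) (hπ x a)
  | succ k ih =>
    exact mul_nonneg (sum_nonneg fun x' _ => sum_nonneg fun a' _ =>
      mul_nonneg (ih x' a') (hp x' a' x)) (hπ x a)

lemma sum_sum_trajDist (hp : IsKernel p) (hν : IsDist ν₀) (hπ : IsPolicy π) (k : ℕ) :
    ∑ x, ∑ a, trajDist p ν₀ π k x a = 1 := by
  induction k with
  | zero => simp only [trajDist, ← mul_sum, hπ.2, mul_one, hν.2]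
  | succ k ih =>
    calc ∑ x, ∑ a, trajDist p ν₀ π (k + 1) x a
        = ∑ x', ∑ a', trajDist p ν₀ π k x' a' * ∑ x, p x' a' x := by
          simp only [sum_trajDist_succ hπ.2]
          rw [sum_comm]
          refine sum_congr rfl fun x' _ => ?_
          rw [sum_comm]
          simp only [mul_sum]
      _ = 1 := by simp only [hp.2, mul_one, ih]

lemma trajDist_le_one (hp : IsKernel p) (hν : IsDist ν₀) (hπ : IsPolicy π) (k : ℕ) (x : X)
    (a : A) : trajDist p ν₀ π k x a ≤ 1 := by
  have h0 := trajDist_nonneg hp.1 hν.1 hπ.1 k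
  calc trajDist p ν₀ π k x a ≤ ∑ b, trajDist p ν₀ π k x b :=
        single_le_sum (fun b _ => h0 x b) (mem_univ a)
    _ ≤ ∑ y, ∑ b, trajDist p ν₀ π k y b :=
        single_le_sum (fun y _ => sum_nonneg fun b _ => h0 y b) (mem_univ x)
    _ = 1 := sum_sum_trajDist hp hν hπ k

lemma summable_pow_mul_trajDist (hγ0 : 0 ≤ γ) (hγ1 : γ < 1) (hp : IsKernel p) (hν : IsDist ν₀)
    (hπ : IsPolicy π) (x : X) (a : A) : Summable fun k => γ ^ k * trajDist p ν₀ π k x a :=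
  (summable_geometric_of_lt_one hγ0 hγ1).of_nonneg_of_le
    (fun k => mul_nonneg (pow_nonneg hγ0 k) (trajDist_nonneg hp.1 hν.1 hπ.1 k x a))
    (fun k => mul_le_of_le_one_right (pow_nonneg hγ0 k) (trajDist_le_one hp hν hπ k x a))

lemma occupancy_nonneg (hγ0 : 0 ≤ γ) (hγ1 : γ ≤ 1) (hp : ∀ x a x', 0 ≤ p x a x')
    (hν : ∀ x, 0 ≤ ν₀ x) (hπ : ∀ x a, 0 ≤ π x a) (x : X) (a : A) :
    0 ≤ occupancy γ p ν₀ π x a :=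
  mul_nonneg (sub_nonneg.2 hγ1) (tsum_nonneg fun k =>
    mul_nonneg (pow_nonneg hγ0 k) (trajDist_nonneg hp hν hπ k x a))

lemma occupancy_eq_sum_mul (hπ : ∀ x, ∑ a, π x a = 1) (x : X) (a : A) :
    occupancy γ p ν₀ π x a = (∑ b, occupancy γ p ν₀ π x b) * π x a := by
  have hfactor : ∀ b, occupancy γ p ν₀ π x b
      = ((1 - γ) * ∑' k, γ ^ k * ∑ c, trajDist p ν₀ π k x c) * π x b := fun b => by
    simp only [occupancy, trajDist_eq_sum_mul hπ _ x b, ← mul_assoc, tsum_mul_right]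
  simp only [hfactor, ← mul_sum, hπ x, mul_one]

/-- Summing the recursion of `trajDist` against `γ ^ k` yields the Bellman flow equation. -/
lemma isBellmanFlow_occupancy (hγ0 : 0 ≤ γ) (hγ1 : γ < 1) (hp : IsKernel p) (hν : IsDist ν₀)
    (hπ : IsPolicy π) : IsBellmanFlow γ p ν₀ (occupancy γ p ν₀ π) := by
  intro x
  set T : ℕ → X → A → ℝ := fun k y b => γ ^ k * trajDist p ν₀ π k y b
  have hT : ∀ y b, Summable fun k => T k y b := summable_pow_mul_trajDist hγ0 hγ1 hp hν hπ
  have hstep : ∀ k, ∑ a, T (k + 1) x a = γ * ∑ x', ∑ a', p x' a' x * T k x' a' := fun k => by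
    simp only [T]
    rw [← mul_sum, sum_trajDist_succ hπ.2, mul_sum, mul_sum]
    refine sum_congr rfl fun x' _ => ?_
    rw [mul_sum, mul_sum]
    exact sum_congr rfl fun a' _ => by ring
  have hsum : ∑' k, ∑ a, T k x a = ν₀ x + γ * ∑ x', ∑ a', p x' a' x * ∑' k, T k x' a' := by
    rw [(summable_sum fun a _ => hT x a).tsum_eq_zero_add]
    simp only [hstep, tsum_mul_left]
    rw [Summable.tsum_finsetSum fun x' _ => summable_sum fun a' _ => (hT x' a').mul_left _]
    simp only [Summable.tsum_finsetSum fun a' _ => (hT _ a').mul_left _, tsum_mul_left]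
    simp [T, trajDist, ← mul_sum, hπ.2 x]
  calc ∑ a, occupancy γ p ν₀ π x a = (1 - γ) * ∑' k, ∑ a, T k x a := by
        rw [Summable.tsum_finsetSum fun a _ => hT x a, mul_sum]; rfl
    _ = _ := by
        have hterm : ∀ x' a', p x' a' x * occupancy γ p ν₀ π x' a'
            = (1 - γ) * (p x' a' x * ∑' k, T k x' a') := fun x' a' => by
          simp only [occupancy, T]
          ring
        rw [hsum]
        simp only [hterm, ← mul_sum]
        ring

lemma primalFeasible_occupancy (hγ0 : 0 ≤ γ) (hγ1 : γ < 1) (hp : IsKernel p) (hν : IsDist ν₀)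
    (hπ : IsPolicy π) : PrimalFeasible γ p ν₀ (occupancy γ p ν₀ π) :=
  ⟨occupancy_nonneg hγ0 hγ1.le hp.1 hν.1 hπ.1, isBellmanFlow_occupancy hγ0 hγ1 hp hν hπ⟩

end Occupancy

section CondPolicy

variable [Fintype A]

def condPolicy (μ : X → A → ℝ) (x : X) (a : A) : ℝ :=
  if ∑ b, μ x b = 0 then (Fintype.card A : ℝ)⁻¹ else μ x a / ∑ b, μ x b

variable {μ : X → A → ℝ}

lemma isPolicy_condPolicy [Nonempty A] (hμ : ∀ x a, 0 ≤ μ x a) : IsPolicy (condPolicy μ) := by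
  refine ⟨fun x a => ?_, fun x => ?_⟩ <;> unfold condPolicy <;> split_ifs with h
  · positivity
  · exact div_nonneg (hμ x a) (sum_nonneg fun b _ => hμ x b)
  · simp
  · rw [← sum_div, div_self h]

lemma sum_mul_condPolicy (hμ : ∀ x a, 0 ≤ μ x a) (x : X) (a : A) :
    (∑ b, μ x b) * condPolicy μ x a = μ x a := by
  unfold condPolicy
  split_ifs with h
  · rw [h, zero_mul]
    exact (le_antisymm (h ▸ single_le_sum (fun b _ => hμ x b) (mem_univ a)) (hμ x a)).symm
  · exact mul_div_cancel₀ _ h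

end CondPolicy

lemma exists_isPolicy_occupancy_eq [Fintype X] [Fintype A] {γ : ℝ} {p : X → A → X → ℝ}
    {ν₀ : X → ℝ} {μ : X → A → ℝ} (hγ0 : 0 ≤ γ) (hγ1 : γ < 1) (hp : IsKernel p)
    (hν : IsDist ν₀) (hμ : PrimalFeasible γ p ν₀ μ) :
    ∃ π, IsPolicy π ∧ occupancy γ p ν₀ π = μ := by
  have := nonempty_of_isBellmanFlow hγ1 hν hμ.2
  have hπ := isPolicy_condPolicy hμ.1
  exact ⟨condPolicy μ, hπ, eq_of_isBellmanFlow hγ0 hγ1 hp hπ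
    (isBellmanFlow_occupancy hγ0 hγ1 hp hν hπ) hμ.2 (occupancy_eq_sum_mul hπ.2)
    fun x a => (sum_mul_condPolicy hμ.1 x a).symm⟩

section LinearMDP

variable [Fintype X] [Fintype A] {d : ℕ}

lemma dotp_comm (u v : Fin d → ℝ) : dotp u v = dotp v u := by
  simp only [dotp, mul_comm]

lemma dotp_featOcc (u : Fin d → ℝ) (φ : X → A → Fin d → ℝ) (μ : X → A → ℝ) :
    dotp u (featOcc φ μ) = ∑ x, ∑ a, μ x a * dotp u (φ x a) := by
  simp only [dotp, featOcc, Finset.sum_apply, Pi.smul_apply, smul_eq_mul, mul_sum]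
  rw [sum_comm]
  refine sum_congr rfl fun x _ => ?_
  rw [sum_comm]
  exact sum_congr rfl fun a _ => sum_congr rfl fun i _ => by ring

lemma mpfeas_iff {γ : ℝ} {p : X → A → X → ℝ} {ν₀ : X → ℝ} {φ : X → A → Fin d → ℝ}
    {ψ : X → Fin d → ℝ} (hplin : ∀ x a x', p x a x' = dotp (φ x a) (ψ x'))
    {lam : Fin d → ℝ} {μ : X → A → ℝ} :
    MPfeas γ ν₀ φ ψ lam μ ↔ PrimalFeasible γ p ν₀ μ ∧ lam = featOcc φ μ := by
  have hinflow : ∀ x, dotp (ψ x) (featOcc φ μ) = ∑ x', ∑ a', p x' a' x * μ x' a' := fun x => by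
    rw [dotp_featOcc]
    simp only [hplin, dotp_comm (ψ x), mul_comm]
  constructor
  · rintro ⟨h0, hflow, rfl⟩
    exact ⟨⟨h0, fun x => (hflow x).trans (by rw [hinflow])⟩, rfl⟩
  · rintro ⟨⟨h0, hflow⟩, rfl⟩
    exact ⟨h0, fun x => (hflow x).trans (by rw [hinflow]), rfl⟩

lemma ret_eq_dotp_featOcc {γ : ℝ} {p : X → A → X → ℝ} {ν₀ : X → ℝ} {r : X → A → ℝ}
    {φ : X → A → Fin d → ℝ} {omg : Fin d → ℝ} (hrlin : ∀ x a, r x a = dotp (φ x a) omg)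
    (π : X → A → ℝ) : ret γ p ν₀ r π = dotp (featOcc φ (occupancy γ p ν₀ π)) omg := by
  simp only [ret, dotp_comm _ omg, dotp_featOcc, hrlin]

end LinearMDP

/-- in a linear MDP, the `μ`-components of the relaxed primal feasible set
coincide with the feasible set of the original primal LP (the valid discounted state-action
occupancy measures), and every maximizer of `⟨λ, ω⟩` over `M^P_Φ` has a `μ`-component which
is the occupancy measure of an optimal policy. -/
theorem statement10 {X A : Type*} [Fintype X] [Fintype A] {d : ℕ}
    (γ : ℝ) (hγ : γ ∈ Set.Ioo (0 : ℝ) 1)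
    (p : X → A → X → ℝ) (hp : IsKernel p)
    (r : X → A → ℝ) (ν₀ : X → ℝ) (hν₀ : IsDist ν₀)
    (φ : X → A → Fin d → ℝ) (ψ : X → Fin d → ℝ) (omg : Fin d → ℝ)
    (hplin : ∀ x a x', p x a x' = dotp (φ x a) (ψ x'))
    (hrlin : ∀ x a, r x a = dotp (φ x a) omg) :
    ({μv : X → A → ℝ | ∃ lam : Fin d → ℝ, MPfeas γ ν₀ φ ψ lam μv}
      = {μv : X → A → ℝ | (∀ x a, 0 ≤ μv x a) ∧
          ∀ x, ∑ a, μv x a = (1 - γ) * ν₀ x + γ * ∑ x', ∑ a', p x' a' x * μv x' a'})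
    ∧
    (∀ (lamstar : Fin d → ℝ) (μstar : X → A → ℝ),
      MPfeas γ ν₀ φ ψ lamstar μstar →
      (∀ (lam : Fin d → ℝ) (μv : X → A → ℝ),
        MPfeas γ ν₀ φ ψ lam μv → dotp lam omg ≤ dotp lamstar omg) →
      ∃ πo : X → A → ℝ, IsPolicy πo ∧
        (∀ π' : X → A → ℝ, IsPolicy π' → ret γ p ν₀ r π' ≤ ret γ p ν₀ r πo) ∧
        μstar = occupancy γ p ν₀ πo) := by
  obtain ⟨hγ0, hγ1⟩ := hγ
  refine ⟨Set.ext fun μ => ⟨fun ⟨_, h⟩ => ((mpfeas_iff hplin).1 h).1,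
    fun h => ⟨_, (mpfeas_iff hplin).2 ⟨h, rfl⟩⟩⟩, ?_⟩
  intro lamstar μstar hstar hmax
  obtain ⟨hfeas, rfl⟩ := (mpfeas_iff hplin).1 hstar
  obtain ⟨πo, hπo, rfl⟩ := exists_isPolicy_occupancy_eq hγ0.le hγ1 hp hν₀ hfeas
  refine ⟨πo, hπo, fun π' hπ' => ?_, rfl⟩
  rw [ret_eq_dotp_featOcc hrlin, ret_eq_dotp_featOcc hrlin]
  exact hmax _ _ ((mpfeas_iff hplin).2 ⟨primalFeasible_occupancy hγ0.le hγ1 hp hν₀ hπ', rfl⟩)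

end Paper
end
end

section
/- In a linear MDP, the set V = {v : (v,θ) ∈ M^D_Φ} of v-components of feasible points of the relaxed dual LP coincides with the feasible set {v : Ev ⪰ r + γPv} of the original dual LP. Furthermore, the optimal value function v^{π*} together with the parameter vector θ^{π*} satisfying q^{π*} = Φθ^{π*} is a minimizer of (1−γ)⟨ν₀, v⟩ over M^D_Φ. -/
/-!
In a linear MDP, `r + γ P v = Φ (ω + γ Ψ v)` for every `v`, so the constraint `θ = ω + γ Ψ v` of
`M^D_Φ` turns `E v ⪰ Φ θ` into `E v ⪰ r + γ P v`, and the two feasible sets agree; the same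
identity gives `q^{π*} = Φ θ^{π*}`.

The rest is the comparison principle for the policy Bellman operator
`T^π v = π (r + γ P v)`: if `v ≤ T^π v` and `T^π w ≤ w` then `v ≤ w`, because at a maximiser of
`v - w` one gets `max (v - w) ≤ γ max (v - w)`. Applied to `v^π = T^π v^π` and a feasible `v`, it
shows that every feasible `v` dominates `v^{π*}`. Applied to `v^{π*}` and the policy that deviates
from `π*` to `a` at `x` alone, it shows `q^{π*}(x, a) ≤ v^{π*}(x)`: otherwise the deviation would
improve on `π*` at `x`.
-/

noncomputable section
open MeasureTheory Finset Matrix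
open scoped BigOperators ENNReal

namespace Paper

variable {X A : Type*}

/-- The feasible set of the relaxed dual LP (4). -/
def MDfeas {X A : Type*} [Fintype X] [Fintype A] {d : ℕ}
    (γ : ℝ) (φ : X → A → Fin d → ℝ) (ψ : X → Fin d → ℝ) (omg : Fin d → ℝ)
    (v : X → ℝ) (θv : Fin d → ℝ) : Prop :=
  (∀ x a, dotp (φ x a) θv ≤ v x) ∧ θv = omg + γ • psiApply ψ v

section StochasticMatrix

variable {n : Type*} [Fintype n] [DecidableEq n] {M : Matrix n n ℝ}

lemma mulVec_le_of_mem_rowStochastic (hM : M ∈ rowStochastic ℝ n) {u : n → ℝ} {m : ℝ}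
    (hu : ∀ j, u j ≤ m) (i : n) : (M *ᵥ u) i ≤ m :=
  calc (M *ᵥ u) i = ∑ j, M i j * u j := rfl
    _ ≤ ∑ j, M i j * m := sum_le_sum fun j _ => mul_le_mul_of_nonneg_left (hu j) (hM.1 i j)
    _ = m := by rw [← sum_mul, sum_row_of_mem_rowStochastic hM, one_mul]

lemma abs_mulVec_le_of_mem_rowStochastic (hM : M ∈ rowStochastic ℝ n) (c : n → ℝ) (i : n) :
    |(M *ᵥ c) i| ≤ ∑ j, |c j| :=
  calc |(M *ᵥ c) i| ≤ ∑ j, |M i j * c j| := abs_sum_le_sum_abs _ _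
    _ ≤ ∑ j, |c j| := sum_le_sum fun j _ => by
      rw [abs_mul, abs_of_nonneg (hM.1 i j)]
      exact mul_le_of_le_one_left (abs_nonneg _) (le_one_of_mem_rowStochastic hM)

lemma summable_geometric_mulVec_of_mem_rowStochastic {γ : ℝ} (hγ0 : 0 ≤ γ) (hγ1 : γ < 1)
    (hM : M ∈ rowStochastic ℝ n) (c : n → ℝ) (i : n) :
    Summable fun k : ℕ => γ ^ k * (M ^ k *ᵥ c) i := by
  refine .of_norm_bounded ((summable_geometric_of_lt_one hγ0 hγ1).mul_right (∑ j, |c j|))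
    fun k => ?_
  rw [norm_mul, norm_pow, Real.norm_of_nonneg hγ0, Real.norm_eq_abs]
  exact mul_le_mul_of_nonneg_left
    (abs_mulVec_le_of_mem_rowStochastic (pow_mem hM k) c i) (pow_nonneg hγ0 k)

lemma nonpos_of_le_mul_mulVec {γ : ℝ} (hγ0 : 0 ≤ γ) (hγ1 : γ < 1)
    (hM : M ∈ rowStochastic ℝ n) {u : n → ℝ} (hu : ∀ i, u i ≤ γ * (M *ᵥ u) i) (i : n) :
    u i ≤ 0 := by
  -- at a maximiser of `u` the hypothesis reads `max u ≤ γ max u`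
  obtain ⟨i₀, -, hi₀⟩ := exists_max_image univ u ⟨i, mem_univ i⟩
  have hmax : ∀ j, u j ≤ u i₀ := fun j => hi₀ j (mem_univ j)
  have : u i₀ ≤ γ * u i₀ :=
    (hu i₀).trans (mul_le_mul_of_nonneg_left (mulVec_le_of_mem_rowStochastic hM hmax i₀) hγ0)
  nlinarith [hmax i]

end StochasticMatrix

section ValueFunctions

variable [Fintype X] [Fintype A] {γ : ℝ} {r : X → A → ℝ} {p : X → A → X → ℝ} {π : X → A → ℝ}

def lookahead (γ : ℝ) (r : X → A → ℝ) (p : X → A → X → ℝ) (v : X → ℝ) (x : X) (a : A) : ℝ :=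
  r x a + γ * ∑ y, p x a y * v y

def policyBellman (γ : ℝ) (r : X → A → ℝ) (p : X → A → X → ℝ) (π : X → A → ℝ) (v : X → ℝ)
    (x : X) : ℝ :=
  ∑ a, π x a * lookahead γ r p v x a

def policyKernel (p : X → A → X → ℝ) (π : X → A → ℝ) : Matrix X X ℝ :=
  of fun x y => ∑ a, π x a * p x a y

def policyReward (r : X → A → ℝ) (π : X → A → ℝ) (x : X) : ℝ := ∑ a, π x a * r x a

lemma policyKernel_mem_rowStochastic [DecidableEq X] (hp : IsKernel p) (hπ : IsPolicy π) :
    policyKernel p π ∈ rowStochastic ℝ X := by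
  refine mem_rowStochastic_iff_sum.2
    ⟨fun x y => sum_nonneg fun a _ => mul_nonneg (hπ.1 x a) (hp.1 x a y), fun x => ?_⟩
  simp only [policyKernel, of_apply]
  rw [sum_comm]
  simp only [← mul_sum, hp.2, mul_one, hπ.2]

lemma policyBellman_eq (v : X → ℝ) (x : X) :
    policyBellman γ r p π v x = policyReward r π x + γ * (policyKernel p π *ᵥ v) x := by
  simp only [policyBellman, lookahead, policyReward, policyKernel, mulVec, dotProduct, of_apply,
    mul_add, sum_add_distrib, mul_sum, sum_mul]
  rw [sum_comm (γ := X)]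
  exact congrArg _ (sum_congr rfl fun a _ => sum_congr rfl fun y _ => by ring)

lemma policyBellman_sub (v w : X → ℝ) (x : X) :
    policyBellman γ r p π v x - policyBellman γ r p π w x
      = γ * (policyKernel p π *ᵥ (v - w)) x := by
  rw [policyBellman_eq, policyBellman_eq, mulVec_sub, Pi.sub_apply]
  ring

lemma policyBellman_le_of_lookahead_le (hπ : IsPolicy π) {v : X → ℝ}
    (hv : ∀ x a, lookahead γ r p v x a ≤ v x) (x : X) : policyBellman γ r p π v x ≤ v x :=
  calc policyBellman γ r p π v x ≤ ∑ a, π x a * v x :=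
        sum_le_sum fun a _ => mul_le_mul_of_nonneg_left (hv x a) (hπ.1 x a)
    _ = v x := by rw [← sum_mul, hπ.2, one_mul]

lemma le_of_le_policyBellman [DecidableEq X] (hγ0 : 0 ≤ γ) (hγ1 : γ < 1) (hp : IsKernel p)
    (hπ : IsPolicy π) {v w : X → ℝ} (hv : ∀ x, v x ≤ policyBellman γ r p π v x)
    (hw : ∀ x, policyBellman γ r p π w x ≤ w x) (x : X) : v x ≤ w x := by
  have hsub : ∀ y, (v - w) y ≤ γ * (policyKernel p π *ᵥ (v - w)) y := fun y => by
    rw [← policyBellman_sub, Pi.sub_apply]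
    linarith [hv y, hw y]
  linarith [nonpos_of_le_mul_mulVec hγ0 hγ1 (policyKernel_mem_rowStochastic hp hπ) hsub x,
    Pi.sub_apply v w x]

variable [DecidableEq X]

lemma kernelPow_eq_pow (p : X → A → X → ℝ) (π : X → A → ℝ) (k : ℕ) :
    kernelPow p π k = policyKernel p π ^ k := by
  induction k with
  | zero => ext x y; simp [kernelPow, one_apply]
  | succ k ih =>
    ext x y
    simp only [kernelPow, ih, pow_succ, mul_apply, policyKernel, of_apply]

lemma vval_eq_tsum (γ : ℝ) (r : X → A → ℝ) (p : X → A → X → ℝ) (π : X → A → ℝ) (x : X) :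
    vval γ r p π x = ∑' k : ℕ, γ ^ k * (policyKernel p π ^ k *ᵥ policyReward r π) x := by
  simp only [vval, kernelPow_eq_pow, mulVec, dotProduct, policyReward]

lemma policyBellman_vval (hγ0 : 0 ≤ γ) (hγ1 : γ < 1) (hp : IsKernel p) (hπ : IsPolicy π)
    (x : X) : policyBellman γ r p π (vval γ r p π) x = vval γ r p π x := by
  set K := policyKernel p π
  set f : ℕ → X → ℝ := fun k y => γ ^ k * (K ^ k *ᵥ policyReward r π) y
  have hf : ∀ y, Summable (f · y) := summable_geometric_mulVec_of_mem_rowStochastic hγ0 hγ1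
    (policyKernel_mem_rowStochastic hp hπ) _
  have hv : ∀ y, vval γ r p π y = ∑' k, f k y := vval_eq_tsum γ r p π
  have hstep : ∀ k, f (k + 1) x = γ * ∑ y, K x y * f k y := fun k => by
    simp only [f, pow_succ', ← mulVec_mulVec]
    simp only [mulVec, dotProduct, mul_sum]
    exact sum_congr rfl fun y _ => sum_congr rfl fun i _ => by ring
  have hf0 : f 0 x = policyReward r π x := by simp [f]
  rw [hv x, (hf x).tsum_eq_zero_add, funext hstep, tsum_mul_left,
    Summable.tsum_finsetSum fun y _ => (hf y).mul_left _, policyBellman_eq, hf0]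
  simp only [tsum_mul_left, ← hv]
  rfl

lemma vval_le_of_lookahead_le (hγ0 : 0 ≤ γ) (hγ1 : γ < 1) (hp : IsKernel p) (hπ : IsPolicy π)
    {v : X → ℝ} (hv : ∀ x a, lookahead γ r p v x a ≤ v x) (x : X) : vval γ r p π x ≤ v x :=
  le_of_le_policyBellman hγ0 hγ1 hp hπ (fun y => (policyBellman_vval hγ0 hγ1 hp hπ y).ge)
    (policyBellman_le_of_lookahead_le hπ hv) x

lemma lookahead_vval_le_vval_of_optimal (hγ0 : 0 ≤ γ) (hγ1 : γ < 1) (hp : IsKernel p)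
    {πstar : X → A → ℝ} (hπstar : IsPolicy πstar)
    (hopt : ∀ π' : X → A → ℝ, IsPolicy π' → ∀ x, vval γ r p π' x ≤ vval γ r p πstar x)
    (x : X) (a : A) : lookahead γ r p (vval γ r p πstar) x a ≤ vval γ r p πstar x := by
  classical
  by_contra! hlt
  set vstar := vval γ r p πstar
  -- switching to `a` at `x` only would then improve on `πstar`
  set π' : X → A → ℝ := Function.update πstar x (Pi.single a 1)
  have hπ' : IsPolicy π' := by
    refine ⟨fun y b => ?_, fun y => ?_⟩ <;> rcases eq_or_ne y x with rfl | hy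
    · simp only [π', Function.update_self, Pi.single_apply]
      split <;> norm_num
    · simpa [π', hy] using hπstar.1 y b
    · simp [π']
    · simpa [π', hy] using hπstar.2 y
  have hT'x : ∀ w, policyBellman γ r p π' w x = lookahead γ r p w x a := fun w => by
    simp [policyBellman, π', Pi.single_apply]
  set v' := vval γ r p π'
  have hsub : ∀ y, vstar y ≤ policyBellman γ r p π' vstar y := fun y => by
    rcases eq_or_ne y x with rfl | hy
    · rw [hT'x]
      exact hlt.le
    · have hT'y : policyBellman γ r p π' vstar y = policyBellman γ r p πstar vstar y := by
        simp [policyBellman, π', hy]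
      rw [hT'y, policyBellman_vval hγ0 hγ1 hp hπstar]
  have hle : ∀ y, vstar y ≤ v' y := le_of_le_policyBellman hγ0 hγ1 hp hπ' hsub
    fun y => (policyBellman_vval hγ0 hγ1 hp hπ' y).le
  have hmono : lookahead γ r p vstar x a ≤ lookahead γ r p v' x a := by
    unfold lookahead
    gcongr with y
    · exact hp.1 x a y
    · exact hle y
  have hv'x : lookahead γ r p v' x a = v' x := by
    rw [← hT'x, policyBellman_vval hγ0 hγ1 hp hπ']
  linarith [hopt π' hπ' x]

end ValueFunctions

section LinearMDP

variable [Fintype X] {d : ℕ} {γ : ℝ} {r : X → A → ℝ} {p : X → A → X → ℝ}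
  {φ : X → A → Fin d → ℝ} {ψ : X → Fin d → ℝ} {omg : Fin d → ℝ}

lemma lookahead_eq_dotp (hplin : ∀ x a x', p x a x' = dotp (φ x a) (ψ x'))
    (hrlin : ∀ x a, r x a = dotp (φ x a) omg) (v : X → ℝ) (x : X) (a : A) :
    lookahead γ r p v x a = dotp (φ x a) (omg + γ • psiApply ψ v) := by
  simp only [lookahead, dotp, psiApply, hrlin, hplin, Pi.add_apply, Pi.smul_apply, smul_eq_mul,
    Finset.sum_apply, mul_add, sum_add_distrib, mul_sum, sum_mul]
  rw [sum_comm (γ := X)]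
  exact congrArg _ (sum_congr rfl fun y _ => sum_congr rfl fun i _ => by ring)

lemma exists_MDfeas_iff [Fintype A] (hplin : ∀ x a x', p x a x' = dotp (φ x a) (ψ x'))
    (hrlin : ∀ x a, r x a = dotp (φ x a) omg) (v : X → ℝ) :
    (∃ θv, MDfeas γ φ ψ omg v θv) ↔ ∀ x a, lookahead γ r p v x a ≤ v x := by
  simp only [lookahead_eq_dotp hplin hrlin]
  exact ⟨fun ⟨_, hle, hθ⟩ => hθ ▸ hle, fun hle => ⟨_, hle, rfl⟩⟩

end LinearMDP

/-- in a linear MDP, the `v`-components of the relaxed dual feasible set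
coincide with the feasible set of the original dual LP; moreover the optimal value function
`v^{π*}`, together with the parameter vector `θ^{π*} = ω + γΨv^{π*}` satisfying
`q^{π*} = Φθ^{π*}`, is a minimizer of `(1−γ)⟨ν₀, v⟩` over `M^D_Φ`. -/
theorem statement11 {X A : Type*} [Fintype X] [Fintype A] [DecidableEq X] {d : ℕ}
    (γ : ℝ) (hγ : γ ∈ Set.Ioo (0 : ℝ) 1)
    (p : X → A → X → ℝ) (hp : IsKernel p)
    (r : X → A → ℝ) (ν₀ : X → ℝ) (hν₀ : IsDist ν₀)
    (φ : X → A → Fin d → ℝ) (ψ : X → Fin d → ℝ) (omg : Fin d → ℝ)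
    (hplin : ∀ x a x', p x a x' = dotp (φ x a) (ψ x'))
    (hrlin : ∀ x a, r x a = dotp (φ x a) omg)
    (πstar : X → A → ℝ) (hπstar : IsPolicy πstar)
    (hopt : ∀ π' : X → A → ℝ, IsPolicy π' → ∀ x, vval γ r p π' x ≤ vval γ r p πstar x) :
    ({v : X → ℝ | ∃ θv : Fin d → ℝ, MDfeas γ φ ψ omg v θv}
      = {v : X → ℝ | ∀ x a, r x a + γ * ∑ x', p x a x' * v x' ≤ v x})
    ∧
    (∀ x a, qval γ r p πstar x a
      = dotp (φ x a) (omg + γ • psiApply ψ (vval γ r p πstar)))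
    ∧
    MDfeas γ φ ψ omg (vval γ r p πstar) (omg + γ • psiApply ψ (vval γ r p πstar))
    ∧
    (∀ (v : X → ℝ) (θv : Fin d → ℝ), MDfeas γ φ ψ omg v θv →
      (1 - γ) * ∑ x, ν₀ x * vval γ r p πstar x ≤ (1 - γ) * ∑ x, ν₀ x * v x) := by
  obtain ⟨hγ0, hγ1⟩ := hγ
  have hq : ∀ x a, qval γ r p πstar x a
      = dotp (φ x a) (omg + γ • psiApply ψ (vval γ r p πstar)) :=
    lookahead_eq_dotp hplin hrlin _
  refine ⟨Set.ext fun v => exists_MDfeas_iff hplin hrlin v, hq,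
    ⟨fun x a => hq x a ▸ lookahead_vval_le_vval_of_optimal hγ0.le hγ1 hp hπstar hopt x a, rfl⟩,
    fun v θv hvθ => ?_⟩
  have hv := (exists_MDfeas_iff hplin hrlin v).1 ⟨θv, hvθ⟩
  gcongr with x
  · exact hν₀.1 x
  · exact vval_le_of_lookahead_le hγ0.le hγ1 hp hπstar hv x

end Paper
end
end

section
/- Under the linear MDP conditions, the gradient g_λ(t) = ω + γΨ̂v_{θ_t,π_t} − θ_t of the estimated objective satisfies ‖Λ̂ g_λ(t)‖²_{Λ̂⁻¹} ≤ 6β(d + D_θ²) + 3d(1 + RD_θ)² + 3γ² d R² D_θ². -/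
/-!
Since `Λ̂ Ψ̂ v = (1/n) ∑ v(X'ᵢ) φᵢ`, the vector `Λ̂ g` splits as
`β (ω - θ) + (1/n) ∑ ⟨φᵢ, ω - θ⟩ φᵢ + (1/n) ∑ γ v(X'ᵢ) φᵢ`,
and `‖a + b + c‖² ≤ 3 (‖a‖² + ‖b‖² + ‖c‖²)` in the `Λ̂⁻¹`-norm. The first term is controlled by
`Λ̂⁻¹ ≼ β⁻¹ I`. For the other two, Cauchy–Schwarz gives, whenever `|cᵢ| ≤ C`,
`‖(1/n) ∑ cᵢ φᵢ‖²_{Λ̂⁻¹} ≤ C² (1/n) ∑ ‖φᵢ‖²_{Λ̂⁻¹} = C² tr (Λ̂⁻¹ (Λ̂ - β I)) ≤ C² d`,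
and the coefficients are bounded by `1 + R D_θ` and `|γ| R D_θ` respectively.
-/

noncomputable section
open MeasureTheory Finset Matrix
open scoped BigOperators ENNReal

namespace Paper

variable {X A : Type*}

section WeightedNorm

variable {d : ℕ}

lemma wnormSq_eq_dotProduct (M : Matrix (Fin d) (Fin d) ℝ) (u : Fin d → ℝ) :
    wnormSq M u = u ⬝ᵥ (M *ᵥ u) := rfl

lemma dotp_eq_inner (u v : Fin d → ℝ) :
    dotp u v = inner ℝ (WithLp.toLp 2 u : EuclideanSpace ℝ (Fin d)) (WithLp.toLp 2 v) := by
  simp [EuclideanSpace.inner_toLp_toLp, dotp, dotProduct, mul_comm]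

lemma nrm2_eq_norm (u : Fin d → ℝ) : nrm2 u = ‖(WithLp.toLp 2 u : EuclideanSpace ℝ (Fin d))‖ := by
  simp [nrm2, EuclideanSpace.norm_eq]

lemma abs_dotp_le (u v : Fin d → ℝ) : |dotp u v| ≤ nrm2 u * nrm2 v := by
  rw [dotp_eq_inner, nrm2_eq_norm, nrm2_eq_norm]
  exact abs_real_inner_le_norm _ _

lemma dotProduct_self_eq_nrm2_sq (u : Fin d → ℝ) : u ⬝ᵥ u = nrm2 u ^ 2 := by
  rw [nrm2_eq_norm, EuclideanSpace.real_norm_sq_eq]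
  simp [dotProduct, sq]

lemma nrm2_nonneg (u : Fin d → ℝ) : 0 ≤ nrm2 u := Real.sqrt_nonneg _

lemma abs_dotp_le_of_nrm2_le {u v : Fin d → ℝ} {a b : ℝ} (hu : nrm2 u ≤ a) (hv : nrm2 v ≤ b) :
    |dotp u v| ≤ a * b :=
  (abs_dotp_le u v).trans (mul_le_mul hu hv (nrm2_nonneg v) ((nrm2_nonneg u).trans hu))

lemma dotProduct_sub_self_le {u v : Fin d → ℝ} {a b : ℝ} (hu : nrm2 u ≤ a) (hv : nrm2 v ≤ b) :
    (u - v) ⬝ᵥ (u - v) ≤ 2 * (a ^ 2 + b ^ 2) := by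
  have htri : nrm2 (u - v) ≤ nrm2 u + nrm2 v := by
    simpa only [nrm2_eq_norm, WithLp.toLp_sub] using norm_sub_le _ _
  rw [dotProduct_self_eq_nrm2_sq]
  nlinarith [nrm2_nonneg u, nrm2_nonneg v, nrm2_nonneg (u - v), sq_nonneg (nrm2 u - nrm2 v)]

lemma wnormSq_smul (M : Matrix (Fin d) (Fin d) ℝ) (c : ℝ) (u : Fin d → ℝ) :
    wnormSq M (c • u) = c ^ 2 * wnormSq M u := by
  simp only [wnormSq, dotp, mulVec_smul, Pi.smul_apply, smul_eq_mul, Finset.mul_sum]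
  exact Finset.sum_congr rfl fun _ _ => by ring

lemma wnormSq_nonneg {M : Matrix (Fin d) (Fin d) ℝ} (hM : M.PosSemidef) (u : Fin d → ℝ) :
    0 ≤ wnormSq M u := by
  simpa [wnormSq_eq_dotProduct] using hM.dotProduct_mulVec_nonneg u

open scoped MatrixOrder in
lemma wnormSq_sum_le {M : Matrix (Fin d) (Fin d) ℝ} (hM : M.PosSemidef) {ι : Type*}
    (s : Finset ι) (y : ι → Fin d → ℝ) :
    wnormSq M (∑ i ∈ s, y i) ≤ #s * ∑ i ∈ s, wnormSq M (y i) := by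
  -- factor `M = B⋆ B`: the claim becomes Cauchy–Schwarz in each coordinate of the `B yᵢ`
  obtain ⟨B, rfl⟩ := CStarAlgebra.nonneg_iff_eq_star_mul_self.mp hM.nonneg
  have hsq : ∀ u, wnormSq (star B * B) u = ∑ j, (B *ᵥ u) j ^ 2 := by
    intro u
    rw [wnormSq_eq_dotProduct, ← mulVec_mulVec, dotProduct_mulVec, star_eq_conjTranspose,
      vecMul_conjTranspose]
    simp [dotProduct, sq]
  simp only [hsq, mulVec_sum, Finset.sum_apply]
  rw [Finset.sum_comm, Finset.mul_sum]
  exact Finset.sum_le_sum fun j _ => sq_sum_le_card_mul_sum_sq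

lemma wnormSq_add_add_le {M : Matrix (Fin d) (Fin d) ℝ} (hM : M.PosSemidef)
    (a b c : Fin d → ℝ) :
    wnormSq M (a + b + c) ≤ 3 * (wnormSq M a + wnormSq M b + wnormSq M c) := by
  simpa [Fin.sum_univ_three] using wnormSq_sum_le hM Finset.univ ![a, b, c]

end WeightedNorm

section Covariance

variable {d n : ℕ} {β : ℝ} (φi : Fin n → Fin d → ℝ)

lemma covMat_mulVec (u : Fin d → ℝ) :
    covMat β φi *ᵥ u = β • u + (n : ℝ)⁻¹ • ∑ i, (φi i ⬝ᵥ u) • φi i := by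
  simp only [covMat, add_mulVec, smul_mulVec, one_mulVec, sum_mulVec, vecMulVec_mulVec]
  congr 2
  ext j
  simp [dotProduct_comm, mul_comm]

lemma dotProduct_covMat_mulVec (u : Fin d → ℝ) :
    u ⬝ᵥ (covMat β φi *ᵥ u) = β * (u ⬝ᵥ u) + (n : ℝ)⁻¹ * ∑ i, (φi i ⬝ᵥ u) ^ 2 := by
  rw [covMat_mulVec, dotProduct_add, dotProduct_smul, dotProduct_smul, dotProduct_sum]
  simp [dotProduct_comm u, sq]

lemma covMat_posDef (hβ : 0 < β) : (covMat β φi).PosDef :=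
  (PosDef.one.smul hβ).add_posSemidef <|
    (posSemidef_sum _ fun i _ => by simpa using posSemidef_vecMulVec_self_star (φi i)).smul
      (by positivity)

lemma isUnit_covMat_det (hβ : 0 < β) : IsUnit (covMat β φi).det :=
  (isUnit_iff_isUnit_det _).mp (covMat_posDef φi hβ).isUnit

lemma covMat_mulVec_psiHatApply {X : Type*} (hβ : 0 < β) (xs : Fin n → X) (v : X → ℝ) :
    covMat β φi *ᵥ psiHatApply β φi xs v = (n : ℝ)⁻¹ • ∑ i, v (xs i) • φi i := by
  rw [psiHatApply, mulVec_mulVec, mul_nonsing_inv _ (isUnit_covMat_det φi hβ), one_mulVec]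

lemma wnormSq_inv_covMat_smul_le (hβ : 0 < β) (u : Fin d → ℝ) :
    wnormSq (covMat β φi)⁻¹ (β • u) ≤ β * (u ⬝ᵥ u) := by
  -- with `y = Λ⁻¹ u`: `β ‖y‖² ≤ yᵀ Λ y = uᵀ y` and `0 ≤ ‖u - β y‖²` give `β uᵀ y ≤ ‖u‖²`
  set y := (covMat β φi)⁻¹ *ᵥ u
  have hu : covMat β φi *ᵥ y = u := by
    rw [mulVec_mulVec, mul_nonsing_inv _ (isUnit_covMat_det φi hβ), one_mulVec]
  have hy : β * (y ⬝ᵥ y) ≤ u ⬝ᵥ y := by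
    have : 0 ≤ (n : ℝ)⁻¹ * ∑ i, (φi i ⬝ᵥ y) ^ 2 := by positivity
    rw [← hu, dotProduct_comm (covMat β φi *ᵥ y), dotProduct_covMat_mulVec]
    linarith
  have hsq : 0 ≤ (u - β • y) ⬝ᵥ (u - β • y) := by
    simpa using dotProduct_self_star_nonneg (u - β • y)
  simp only [sub_dotProduct, dotProduct_sub, smul_dotProduct, dotProduct_smul, smul_eq_mul,
    dotProduct_comm y u] at hsq
  rw [wnormSq_smul, wnormSq_eq_dotProduct]
  nlinarith

lemma inv_mul_sum_wnormSq_inv_covMat_le (hβ : 0 < β) :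
    (n : ℝ)⁻¹ * ∑ i, wnormSq (covMat β φi)⁻¹ (φi i) ≤ d := by
  have hS : (n : ℝ)⁻¹ • ∑ i, vecMulVec (φi i) (φi i) = covMat β φi - β • 1 := by
    rw [covMat, add_sub_cancel_left]
  calc (n : ℝ)⁻¹ * ∑ i, wnormSq (covMat β φi)⁻¹ (φi i)
      = trace ((covMat β φi)⁻¹ * ((n : ℝ)⁻¹ • ∑ i, vecMulVec (φi i) (φi i))) := by
        simp [wnormSq_eq_dotProduct, mul_sum, trace_sum, mul_vecMulVec, dotProduct_comm]
    _ = trace (1 - β • (covMat β φi)⁻¹) := by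
        rw [hS, mul_sub, nonsing_inv_mul _ (isUnit_covMat_det φi hβ), mul_smul_comm, mul_one]
    _ = d - β * trace (covMat β φi)⁻¹ := by simp [trace_sub, trace_smul]
    _ ≤ d := by nlinarith [(covMat_posDef φi hβ).inv.posSemidef.trace_nonneg]

lemma wnormSq_inv_covMat_average_le (hβ : 0 < β) {c : Fin n → ℝ} {C : ℝ} (hc : ∀ i, |c i| ≤ C) :
    wnormSq (covMat β φi)⁻¹ ((n : ℝ)⁻¹ • ∑ i, c i • φi i) ≤ C ^ 2 * d := by
  have hM := (covMat_posDef φi hβ).inv.posSemidef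
  have hc2 (i : Fin n) : c i ^ 2 ≤ C ^ 2 := sq_abs (c i) ▸ pow_le_pow_left₀ (abs_nonneg _) (hc i) 2
  have hinv : (n : ℝ)⁻¹ ^ 2 * n = (n : ℝ)⁻¹ := by
    rw [sq, mul_right_comm]
    simpa using mul_inv_mul_cancel (n : ℝ)⁻¹
  calc wnormSq (covMat β φi)⁻¹ ((n : ℝ)⁻¹ • ∑ i, c i • φi i)
      ≤ (n : ℝ)⁻¹ ^ 2 * (n * ∑ i, c i ^ 2 * wnormSq (covMat β φi)⁻¹ (φi i)) := by
        rw [wnormSq_smul]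
        gcongr
        simpa [wnormSq_smul] using wnormSq_sum_le hM Finset.univ (fun i => c i • φi i)
    _ ≤ (n : ℝ)⁻¹ * ∑ i, C ^ 2 * wnormSq (covMat β φi)⁻¹ (φi i) := by
        rw [← mul_assoc, hinv]
        gcongr _ * ∑ i, ?_ * _ with i
        exacts [wnormSq_nonneg hM _, hc2 i]
    _ = C ^ 2 * ((n : ℝ)⁻¹ * ∑ i, wnormSq (covMat β φi)⁻¹ (φi i)) := by
        rw [← mul_sum]; ring
    _ ≤ C ^ 2 * d := by gcongr; exact inv_mul_sum_wnormSq_inv_covMat_le φi hβ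

end Covariance

lemma abs_vparam_le [Fintype A] {d : ℕ} {φ : X → A → Fin d → ℝ} {θ : Fin d → ℝ}
    {π : X → A → ℝ} (hπ : IsPolicy π) {C : ℝ} (hC : ∀ x a, |dotp θ (φ x a)| ≤ C) (x : X) :
    |vparam φ θ π x| ≤ C :=
  calc |vparam φ θ π x| ≤ ∑ a, π x a * |dotp θ (φ x a)| := by
        refine (abs_sum_le_sum_abs _ _).trans_eq (sum_congr rfl fun a _ => ?_)
        rw [abs_mul, abs_of_nonneg (hπ.1 x a)]
    _ ≤ ∑ a, π x a * C := by gcongr with a; exact hπ.1 x a; exact hC x a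
    _ = C := by rw [← sum_mul, hπ.2 x, one_mul]

lemma covMat_mulVec_add_smul_psiHatApply_sub {d n : ℕ} {β : ℝ} (φi : Fin n → Fin d → ℝ)
    (hβ : 0 < β) (ω θ : Fin d → ℝ) (γ : ℝ) (xs : Fin n → X) (v : X → ℝ) :
    covMat β φi *ᵥ (ω + γ • psiHatApply β φi xs v - θ)
      = β • (ω - θ) + (n : ℝ)⁻¹ • ∑ i, (φi i ⬝ᵥ (ω - θ)) • φi i
        + (n : ℝ)⁻¹ • ∑ i, (γ * v (xs i)) • φi i := by
  rw [show ω + γ • psiHatApply β φi xs v - θ = (ω - θ) + γ • psiHatApply β φi xs v by abel,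
    mulVec_add, mulVec_smul, covMat_mulVec, covMat_mulVec_psiHatApply φi hβ, smul_comm γ,
    smul_sum (r := γ)]
  simp only [smul_smul]

theorem statement13_general {X A : Type*} [Fintype X] [Fintype A] {d n : ℕ}
    (R β γ Dθ : ℝ) (hβ : 0 < β)
    (φ : X → A → Fin d → ℝ) (hφ : ∀ x a, nrm2 (φ x a) ≤ R)
    (omg : Fin d → ℝ) (homg : nrm2 omg ≤ Real.sqrt d)
    (Xi : Fin n → X) (Ai : Fin n → A) (Xs : Fin n → X)
    (hrw : ∀ i, dotp (φ (Xi i) (Ai i)) omg ∈ Set.Icc (0 : ℝ) 1)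
    (θ : Fin d → ℝ) (hθ : nrm2 θ ≤ Dθ)
    (π : X → A → ℝ) (hπ : IsPolicy π) :
    wnormSq (covMat β (fun i => φ (Xi i) (Ai i)))⁻¹
        ((covMat β (fun i => φ (Xi i) (Ai i))).mulVec
          (omg + γ • psiHatApply β (fun i => φ (Xi i) (Ai i)) Xs (vparam φ θ π) - θ))
      ≤ 6 * β * (d + Dθ ^ 2) + 3 * d * (1 + R * Dθ) ^ 2 + 3 * γ ^ 2 * d * R ^ 2 * Dθ ^ 2 := by
  set φi : Fin n → Fin d → ℝ := fun i => φ (Xi i) (Ai i)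
  have hΛ := (covMat_posDef φi hβ).inv.posSemidef
  have hθφ (x : X) (a : A) : |dotp θ (φ x a)| ≤ Dθ * R := abs_dotp_le_of_nrm2_le hθ (hφ x a)
  have hsample (i : Fin n) : |φi i ⬝ᵥ (omg - θ)| ≤ 1 + Dθ * R := by
    have hω : φi i ⬝ᵥ omg ∈ Set.Icc 0 1 := hrw i
    rw [dotProduct_sub, dotProduct_comm _ θ]
    exact (abs_sub _ _).trans (add_le_add ((abs_of_nonneg hω.1).trans_le hω.2) (hθφ _ _))
  have hnext (i : Fin n) : |γ * vparam φ θ π (Xs i)| ≤ |γ| * (Dθ * R) := by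
    rw [abs_mul]
    exact mul_le_mul_of_nonneg_left (abs_vparam_le hπ hθφ _) (abs_nonneg γ)
  have hdiff : (omg - θ) ⬝ᵥ (omg - θ) ≤ 2 * (d + Dθ ^ 2) := by
    simpa using dotProduct_sub_self_le homg hθ
  rw [covMat_mulVec_add_smul_psiHatApply_sub φi hβ]
  calc _ ≤ 3 * (wnormSq (covMat β φi)⁻¹ (β • (omg - θ))
          + wnormSq (covMat β φi)⁻¹ ((n : ℝ)⁻¹ • ∑ i, (φi i ⬝ᵥ (omg - θ)) • φi i)
          + wnormSq (covMat β φi)⁻¹ ((n : ℝ)⁻¹ • ∑ i, (γ * vparam φ θ π (Xs i)) • φi i)) :=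
        wnormSq_add_add_le hΛ _ _ _
    _ ≤ 3 * (β * (2 * (d + Dθ ^ 2)) + (1 + Dθ * R) ^ 2 * d + (|γ| * (Dθ * R)) ^ 2 * d) := by
        gcongr
        · exact (wnormSq_inv_covMat_smul_le φi hβ _).trans (by gcongr)
        · exact wnormSq_inv_covMat_average_le φi hβ hsample
        · exact wnormSq_inv_covMat_average_le φi hβ hnext
    _ = _ := by rw [mul_pow, sq_abs]; ring

/-- bound on the weighted norm of the gradient of the estimated objective:
`‖Λ̂ g_λ(t)‖²_{Λ̂⁻¹} ≤ 6β(d + D_θ²) + 3d(1 + RD_θ)² + 3γ²dR²D_θ²`. -/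
theorem statement13 {X A : Type*} [Fintype X] [Fintype A] {d n : ℕ} (hn : 0 < n)
    (R β γ Dθ : ℝ) (hβ : 0 < β) (hγ : γ ∈ Set.Ioo (0 : ℝ) 1)
    (φ : X → A → Fin d → ℝ) (hφ : ∀ x a, nrm2 (φ x a) ≤ R)
    (omg : Fin d → ℝ) (homg : nrm2 omg ≤ Real.sqrt d)
    (Xi : Fin n → X) (Ai : Fin n → A) (Xs : Fin n → X)
    (hrw : ∀ i, dotp (φ (Xi i) (Ai i)) omg ∈ Set.Icc (0 : ℝ) 1)
    (θ : Fin d → ℝ) (hθ : nrm2 θ ≤ Dθ)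
    (π : X → A → ℝ) (hπ : IsPolicy π) :
    wnormSq (covMat β (fun i => φ (Xi i) (Ai i)))⁻¹
        ((covMat β (fun i => φ (Xi i) (Ai i))).mulVec
          (omg + γ • psiHatApply β (fun i => φ (Xi i) (Ai i)) Xs (vparam φ θ π) - θ))
      ≤ 6 * β * (d + Dθ ^ 2) + 3 * d * (1 + R * Dθ) ^ 2 + 3 * γ ^ 2 * d * R ^ 2 * Dθ ^ 2 :=
  statement13_general R β γ Dθ hβ φ hφ omg homg Xi Ai Xs hrw θ hθ π hπ

end Paper
end
end
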